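/- Let h : ℝⁿ → ℝⁿ be a C¹ diffeomorphism such that at every point its Jacobian matrix H(x) has, in each row, exactly one non-zero entry, and the position of this non-zero entry in each row is constant in x. Then h is a permuted component-wise transformation: there is a permutation π of {1,...,n} and strictly monotone C¹ functions h₁,...,hₙ : ℝ → ℝ with h(x)ᵢ = hᵢ(x_{π(i)}). -/

import Mathlib

/-!
Since row `i` of the Jacobian vanishes outside column `σ i`, the derivative of `hᵢ` kills every
direction with zero `σ i`-coordinate, so by the mean value theorem `hᵢ` depends on `x_{σ i}` only.
An injective map cannot ignore a coordinate, so `σ` is surjective, hence a permutation. Finally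
`t ↦ hᵢ(t e_{σ i})` has everywhere non-zero derivative, so by Darboux's theorem its derivative has
constant sign and the function is strictly monotone.
-/

open Function

theorem LinearMap.apply_eq_smul_of_apply_single_eq_zero {R M ι : Type*} [CommSemiring R]
    [AddCommMonoid M] [Module R M] [Fintype ι] [DecidableEq ι] (L : (ι → R) →ₗ[R] M) {k : ι}
    (hL : ∀ j ≠ k, L (Pi.single j 1) = 0) (v : ι → R) : L v = v k • L (Pi.single k 1) := by
  have hsingle : ∀ j, Pi.single j (v j) = v j • Pi.single j (1 : R) := fun j => by
    rw [← Pi.single_smul', smul_eq_mul, mul_one]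
  conv_lhs => rw [← Finset.univ_sum_single v]
  rw [map_sum, Finset.sum_eq_single k (fun j _ hj => ?_) (by simp), hsingle, map_smul]
  rw [hsingle, map_smul, hL j hj, smul_zero]

theorem Differentiable.apply_add_eq_of_fderiv_apply_eq_zero {𝕜 E G : Type*} [RCLike 𝕜]
    [NormedAddCommGroup E] [NormedSpace 𝕜 E] [NormedAddCommGroup G] [NormedSpace 𝕜 G]
    {f : E → G} (hf : Differentiable 𝕜 f) {v : E} (hv : ∀ z, fderiv 𝕜 f z v = 0) (x : E) :
    f (x + v) = f x := by
  have hline : ∀ t : 𝕜, HasDerivAt (fun t => f (x + t • v)) 0 t := fun t => by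
    have hpath : HasDerivAt (fun t : 𝕜 => x + t • v) v t := by
      simpa using ((hasDerivAt_id t).smul_const v).const_add x
    exact ((hf _).hasFDerivAt.comp_hasDerivAt t hpath).congr_deriv (hv _)
  simpa using is_const_of_deriv_eq_zero (fun t => (hline t).differentiableAt)
    (fun t => (hline t).deriv) 1 0

theorem Differentiable.dependsOn_singleton_of_fderiv_single_eq_zero {𝕜 ι G : Type*} [RCLike 𝕜]
    [Fintype ι] [DecidableEq ι] [NormedAddCommGroup G] [NormedSpace 𝕜 G] {f : (ι → 𝕜) → G}
    (hf : Differentiable 𝕜 f) {k : ι} (hk : ∀ x, ∀ j ≠ k, fderiv 𝕜 f x (Pi.single j 1) = 0) :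
    DependsOn f {k} := by
  intro x y hxy
  have hv : ∀ z, fderiv 𝕜 f z (y - x) = 0 := fun z => by
    rw [← ContinuousLinearMap.coe_coe,
      LinearMap.apply_eq_smul_of_apply_single_eq_zero _ (hk z)]
    simp [hxy k rfl]
  simpa using (hf.apply_add_eq_of_fderiv_apply_eq_zero hv x).symm

theorem Function.Injective.surjective_of_dependsOn_singleton {ι κ α β : Type*} [Nontrivial α]
    {f : (ι → α) → κ → β} (hf : Injective f) {σ : κ → ι} (hσ : ∀ i, DependsOn (f · i) {σ i}) :
    Surjective σ := by
  classical
  intro j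
  by_contra! hj
  obtain ⟨a, b, hab⟩ := exists_pair_ne α
  have hfeq : f (fun _ => a) = f (update (fun _ => a) j b) :=
    funext fun i => hσ i (by simp [update_of_ne (hj i)])
  exact hab (by simpa using congrFun (hf hfeq) j)

theorem strictMono_or_strictAnti_of_hasDerivAt_ne_zero {f f' : ℝ → ℝ}
    (hf : ∀ x, HasDerivAt f (f' x) x) (hf' : ∀ x, f' x ≠ 0) : StrictMono f ∨ StrictAnti f := by
  rcases hasDerivWithinAt_forall_lt_or_forall_gt_of_forall_ne convex_univ
    (fun x _ => (hf x).hasDerivWithinAt) (fun x _ => hf' x) with hneg | hpos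
  · exact Or.inr (strictAnti_of_hasDerivAt_neg hf fun x => hneg x trivial)
  · exact Or.inl (strictMono_of_hasDerivAt_pos hf fun x => hpos x trivial)

theorem diffeo_with_row_sparse_jacobian_is_permuted_componentwise_general
    {n : ℕ} (h : (Fin n → ℝ) → Fin n → ℝ)
    (hbij : Function.Bijective h)
    (hC1 : ContDiff ℝ 1 h)
    (σ : Fin n → Fin n)
    (hjac : ∀ (x : Fin n → ℝ) (i j : Fin n),
      fderiv ℝ h x (Pi.single j 1) i ≠ 0 ↔ j = σ i) :
    ∃ (π : Equiv.Perm (Fin n)) (h' : Fin n → ℝ → ℝ),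
      (∀ i, StrictMono (h' i) ∨ StrictAnti (h' i)) ∧
      (∀ i, ContDiff ℝ 1 (h' i)) ∧
      ∀ (x : Fin n → ℝ) (i : Fin n), h x i = h' i (x (π i)) := by
  have hdiff : Differentiable ℝ h := hC1.differentiable one_ne_zero
  have hdep : ∀ i, DependsOn (h · i) {σ i} := fun i =>
    (differentiable_pi.1 hdiff i).dependsOn_singleton_of_fderiv_single_eq_zero fun x j hj => by
      simpa [fderiv_apply (hdiff x)] using mt (hjac x i j).1 hj
  have hσ : Surjective σ := hbij.injective.surjective_of_dependsOn_singleton hdep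
  refine ⟨Equiv.ofBijective σ (Finite.surjective_iff_bijective.1 hσ),
    fun i t => h (Pi.single (σ i) t) i, fun i => ?_, fun i => ?_, fun x i => hdep i ?_⟩
  · have hderiv : ∀ t, HasDerivAt (fun t => h (Pi.single (σ i) t) i)
        (fderiv ℝ h (Pi.single (σ i) t) (Pi.single (σ i) 1) i) t := fun t =>
      (hasFDerivAt_pi'.1 (hdiff _).hasFDerivAt i).comp_hasDerivAt t (hasDerivAt_single (σ i) t)
    exact strictMono_or_strictAnti_of_hasDerivAt_ne_zero hderiv fun t => (hjac _ i (σ i)).2 rfl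
  · exact (contDiff_apply ℝ ℝ i).comp (hC1.comp (contDiff_single _ 1 (σ i)))
  · rintro _ rfl
    exact (Pi.single_eq_same (M := fun _ => ℝ) (σ i) (x (σ i))).symm

/-- If `h : ℝⁿ → ℝⁿ` is a `C¹` diffeomorphism whose Jacobian has, in each row
`i`, exactly one non-zero entry, located at a column `σ i` that does not depend
on the point, then `h` is a permuted component-wise transformation: there are a
permutation `π` and strictly monotone `C¹` functions `hᵢ : ℝ → ℝ` with
`h(x)ᵢ = hᵢ(x_{π i})`. -/
theorem diffeo_with_row_sparse_jacobian_is_permuted_componentwise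
    {n : ℕ} (h : (Fin n → ℝ) → Fin n → ℝ)
    (hbij : Function.Bijective h)
    (hC1 : ContDiff ℝ 1 h)
    (hinvC1 : ContDiff ℝ 1 (Function.invFun h))
    (σ : Fin n → Fin n)
    (hjac : ∀ (x : Fin n → ℝ) (i j : Fin n),
      fderiv ℝ h x (Pi.single j 1) i ≠ 0 ↔ j = σ i) :
    ∃ (π : Equiv.Perm (Fin n)) (h' : Fin n → ℝ → ℝ),
      (∀ i, StrictMono (h' i) ∨ StrictAnti (h' i)) ∧
      (∀ i, ContDiff ℝ 1 (h' i)) ∧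
      ∀ (x : Fin n → ℝ) (i : Fin n), h x i = h' i (x (π i)) :=
  diffeo_with_row_sparse_jacobian_is_permuted_componentwise_general h hbij hC1 σ hjac
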